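/- In the graph product G(Γ), if an element g ends with the generator s and also ends with the generator t, with s ≠ t, then s and t are joined by an edge of Γ (and hence commute). -/

import Mathlib

open Pointwise

/-- Relations of the graph product of cyclic groups: `s ^ n = 1` whenever the label of
`s` is the finite value `n`, and commutators of generators joined by an edge. -/
def graphProductRels {V : Type*} (Γ : SimpleGraph V) (c : V → ℕ∞) : Set (FreeGroup V) :=
  {r | (∃ (s : V) (n : ℕ), c s = (n : ℕ∞) ∧ r = FreeGroup.of s ^ n) ∨
       (∃ s t : V, Γ.Adj s t ∧
         r = FreeGroup.of s * FreeGroup.of t * (FreeGroup.of s)⁻¹ * (FreeGroup.of t)⁻¹)}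

/-- The graph product of cyclic groups associated to a graph `Γ` with labeling `c`. -/
abbrev GraphProduct {V : Type*} (Γ : SimpleGraph V) (c : V → ℕ∞) : Type _ :=
  PresentedGroup (graphProductRels Γ c)

/-- The generator of `GraphProduct Γ c` corresponding to a vertex `s`. -/
def gpGen {V : Type*} (Γ : SimpleGraph V) (c : V → ℕ∞) (s : V) : GraphProduct Γ c :=
  PresentedGroup.of s

/-- The element of the graph product represented by a word `(s₁^{e₁}, …, s_k^{e_k})`. -/
def wordProd {V : Type*} (Γ : SimpleGraph V) (c : V → ℕ∞) (w : List (V × ℤ)) :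
    GraphProduct Γ c :=
  (w.map (fun p => gpGen Γ c p.1 ^ p.2)).prod

/-- The elementary moves on words: deleting a letter that is trivial in the vertex group,
merging consecutive powers of the same generator, and swapping consecutive letters whose
generators are joined by an edge. -/
inductive GPMove {V : Type*} (Γ : SimpleGraph V) (c : V → ℕ∞) :
    List (V × ℤ) → List (V × ℤ) → Prop
  | del (w₁ w₂ : List (V × ℤ)) (s : V) (e : ℤ) (h : gpGen Γ c s ^ e = 1) :
      GPMove Γ c (w₁ ++ (s, e) :: w₂) (w₁ ++ w₂)
  | merge (w₁ w₂ : List (V × ℤ)) (s : V) (a b : ℤ) :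
      GPMove Γ c (w₁ ++ (s, a) :: (s, b) :: w₂) (w₁ ++ (s, a + b) :: w₂)
  | swap (w₁ w₂ : List (V × ℤ)) (s t : V) (a b : ℤ) (h : Γ.Adj s t) :
      GPMove Γ c (w₁ ++ (s, a) :: (t, b) :: w₂) (w₁ ++ (t, b) :: (s, a) :: w₂)

/-- A word is reduced if it cannot be shortened by any sequence of elementary moves. -/
def GPReduced {V : Type*} (Γ : SimpleGraph V) (c : V → ℕ∞) (w : List (V × ℤ)) : Prop :=
  ∀ w', Relation.ReflTransGen (GPMove Γ c) w w' → w.length ≤ w'.length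

/-- The length of a word: infinite-order letters count with the absolute value of their
exponent, finite-order letters count once. -/
def wordLen {V : Type*} (c : V → ℕ∞) (w : List (V × ℤ)) : ℕ :=
  (w.map (fun p => if c p.1 = ⊤ then p.2.natAbs else 1)).sum

/-- The length of a group element: the minimum of the lengths of words representing it. -/
noncomputable def elLen {V : Type*} (Γ : SimpleGraph V) (c : V → ℕ∞)
    (g : GraphProduct Γ c) : ℕ :=
  sInf {n | ∃ w, wordProd Γ c w = g ∧ wordLen c w = n}

/-- `g` ends with the generator `s`. -/
def EndsWith {V : Type*} (Γ : SimpleGraph V) (c : V → ℕ∞) (g : GraphProduct Γ c)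
    (s : V) : Prop :=
  ∃ (w : List (V × ℤ)) (e : ℤ), GPReduced Γ c (w ++ [(s, e)]) ∧
    wordProd Γ c (w ++ [(s, e)]) = g

/-!
Van der Waerden's trick. Letters are pairs `(s, x)` with `x` in a group `G`; for the graph
product we take `G` to be the graph product itself and `x = gpGen s ^ e`, so no vertex groups
have to be constructed. Inserting `(s, x)` at the front of a word moves it past letters on
vertices adjacent to `s` and merges it with the first letter on `s` it reaches. On normal words
up to swaps of adjacent letters, insertion at `s` is an action of `G`, and insertions at
adjacent vertices commute, so the graph product acts. A reduced word sends the empty word to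
itself up to swaps, so two reduced words for one element differ only by swaps. Finally, having
a letter on `s` that swaps can bring to the end is invariant under swaps, and two distinct
vertices with this property are adjacent.
-/

namespace GraphProduct

section Words

variable {V α : Type*} (Γ : SimpleGraph V)

inductive SwapStep : List (V × α) → List (V × α) → Prop
  | swap (w₁ w₂ : List (V × α)) (s t : V) (x y : α) (h : Γ.Adj s t) :
      SwapStep (w₁ ++ (s, x) :: (t, y) :: w₂) (w₁ ++ (t, y) :: (s, x) :: w₂)

abbrev SwapEquiv : List (V × α) → List (V × α) → Prop :=
  Relation.ReflTransGen (SwapStep Γ)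

def StartsWith (s : V) : List (V × α) → Prop
  | [] => False
  | (t, _) :: w => s = t ∨ (Γ.Adj s t ∧ StartsWith s w)

variable {Γ}

@[simp] lemma startsWith_nil (s : V) : ¬ StartsWith Γ s ([] : List (V × α)) := id

@[simp] lemma startsWith_cons (s t : V) (y : α) (w : List (V × α)) :
    StartsWith Γ s ((t, y) :: w) ↔ s = t ∨ (Γ.Adj s t ∧ StartsWith Γ s w) := Iff.rfl

lemma SwapStep.head {s t : V} {x y : α} (h : Γ.Adj s t) (w : List (V × α)) :
    SwapStep Γ ((s, x) :: (t, y) :: w) ((t, y) :: (s, x) :: w) :=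
  SwapStep.swap [] w s t x y h

lemma SwapStep.cons (a : V × α) {w w' : List (V × α)} (h : SwapStep Γ w w') :
    SwapStep Γ (a :: w) (a :: w') := by
  obtain ⟨w₁, w₂, s, t, x, y, h⟩ := h
  exact SwapStep.swap (a :: w₁) w₂ s t x y h

instance : Std.Symm (SwapStep Γ (α := α)) where
  symm _ _ h := by
    obtain ⟨w₁, w₂, s, t, x, y, h⟩ := h
    exact SwapStep.swap w₁ w₂ t s y x h.symm

lemma SwapStep.reverse {w w' : List (V × α)} (h : SwapStep Γ w w') :
    SwapStep Γ w.reverse w'.reverse := by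
  obtain ⟨w₁, w₂, s, t, x, y, h⟩ := h
  simpa using SwapStep.swap w₂.reverse w₁.reverse t s y x h.symm

lemma SwapEquiv.symm {w w' : List (V × α)} (h : SwapEquiv Γ w w') : SwapEquiv Γ w' w :=
  Std.Symm.symm _ _ h

lemma SwapEquiv.cons (a : V × α) {w w' : List (V × α)} (h : SwapEquiv Γ w w') :
    SwapEquiv Γ (a :: w) (a :: w') :=
  Relation.ReflTransGen.lift (a :: ·) (fun _ _ => SwapStep.cons a) _ _ h

lemma SwapEquiv.reverse {w w' : List (V × α)} (h : SwapEquiv Γ w w') :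
    SwapEquiv Γ w.reverse w'.reverse :=
  Relation.ReflTransGen.lift List.reverse (fun _ _ => SwapStep.reverse) _ _ h

lemma SwapStep.startsWith_iff {s : V} {w w' : List (V × α)} (h : SwapStep Γ w w') :
    StartsWith Γ s w ↔ StartsWith Γ s w' := by
  obtain ⟨w₁, w₂, p, q, y, z, hpq⟩ := h
  induction w₁ with
  | nil =>
    have := hpq.ne
    simp only [List.nil_append, startsWith_cons]
    constructor <;> rintro (rfl | ⟨h₁, rfl | ⟨h₂, h₃⟩⟩) <;> simp_all [hpq.symm]
  | cons a w₁ ih =>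
    obtain ⟨t, x⟩ := a
    simp only [List.cons_append, startsWith_cons, ih]

lemma SwapEquiv.startsWith {s : V} {w w' : List (V × α)} (h : SwapEquiv Γ w w')
    (hs : StartsWith Γ s w) : StartsWith Γ s w' := by
  induction h with
  | refl => exact hs
  | tail _ hstep ih => exact hstep.startsWith_iff.mp ih

lemma startsWith_map {β : Type*} (f : V × α → β) (s : V) (w : List (V × α)) :
    StartsWith Γ s (w.map fun p => (p.1, f p)) ↔ StartsWith Γ s w := by
  induction w with
  | nil => simp
  | cons p w ih =>
    obtain ⟨t, y⟩ := p
    simp [ih]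

lemma adj_of_startsWith {s t : V} (hst : s ≠ t) {w : List (V × α)}
    (hs : StartsWith Γ s w) (ht : StartsWith Γ t w) : Γ.Adj s t := by
  induction w with
  | nil => exact hs.elim
  | cons p w ih =>
    obtain ⟨u, y⟩ := p
    rcases hs with rfl | ⟨hsu, hs⟩ <;> rcases ht with rfl | ⟨htu, ht⟩
    exacts [absurd rfl hst, htu.symm, hsu, ih hs ht]

end Words

section Insertion

variable {V G : Type*} (Γ : SimpleGraph V) [Group G]

def IsNormal : List (V × G) → Prop
  | [] => True
  | (t, y) :: w => y ≠ 1 ∧ ¬ StartsWith Γ t w ∧ IsNormal w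

lemma isNormal_nil : IsNormal Γ ([] : List (V × G)) := trivial

variable [DecidableEq V] [DecidableRel Γ.Adj] [DecidableEq G]

def insertCore (s : V) (x : G) : List (V × G) → List (V × G)
  | [] => [(s, x)]
  | (t, y) :: w =>
      if s = t then (if x * y = 1 then w else (s, x * y) :: w)
      else if Γ.Adj s t then (t, y) :: insertCore s x w
      else (s, x) :: (t, y) :: w

def insert (s : V) (x : G) (w : List (V × G)) : List (V × G) :=
  if x = 1 then w else insertCore Γ s x w

variable {Γ}

@[simp] lemma insertCore_nil (s : V) (x : G) : insertCore Γ s x [] = [(s, x)] := rfl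

lemma insertCore_cons (s t : V) (x y : G) (w : List (V × G)) :
    insertCore Γ s x ((t, y) :: w) =
      if s = t then (if x * y = 1 then w else (s, x * y) :: w)
      else if Γ.Adj s t then (t, y) :: insertCore Γ s x w
      else (s, x) :: (t, y) :: w := rfl

lemma insertCore_cons_of_adj {s t : V} (hst : Γ.Adj s t) (x z : G) (w : List (V × G)) :
    insertCore Γ s x ((t, z) :: w) = (t, z) :: insertCore Γ s x w := by
  rw [insertCore_cons, if_neg hst.ne, if_pos hst]

lemma insert_of_eq_one (s : V) (w : List (V × G)) : insert Γ s 1 w = w := if_pos rfl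

lemma insert_of_ne_one (s : V) {x : G} (hx : x ≠ 1) (w : List (V × G)) :
    insert Γ s x w = insertCore Γ s x w := if_neg hx

lemma startsWith_of_startsWith_insertCore {s t : V} (hts : Γ.Adj t s) {x : G}
    {w : List (V × G)} (h : StartsWith Γ t (insertCore Γ s x w)) : StartsWith Γ t w := by
  induction w with
  | nil => simp [hts.ne] at h
  | cons a w ih =>
    obtain ⟨u, y⟩ := a
    rw [insertCore_cons] at h
    split_ifs at h <;> simp_all [hts.ne]
    exact h.imp_right (And.imp_right ih)

lemma insertCore_swapStep (s : V) (x : G) {w w' : List (V × G)} (h : SwapStep Γ w w') :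
    SwapEquiv Γ (insertCore Γ s x w) (insertCore Γ s x w') := by
  obtain ⟨w₁, w₂, p, q, α, β, hpq⟩ := h
  induction w₁ with
  | nil =>
    simp only [List.nil_append, insertCore_cons]
    by_cases hsp : s = p
    · subst hsp
      simp only [if_pos, if_neg hpq.ne, hpq]
      split_ifs
      exacts [.refl, .single (.head hpq _)]
    by_cases hsq : s = q
    · subst hsq
      simp only [if_pos, if_neg hsp, hpq.symm]
      split_ifs
      exacts [.refl, .single (.head hpq _)]
    by_cases hsp' : Γ.Adj s p <;> by_cases hsq' : Γ.Adj s q <;>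
      simp only [hsp, hsq, hsp', hsq', if_true, if_false]
    · exact .single (.head hpq _)
    · exact .head (.head hsp'.symm _) (.single ((SwapStep.head hpq _).cons _))
    · exact .head ((SwapStep.head hpq _).cons _) (.single (.head hsq' _))
    · exact .single ((SwapStep.head hpq _).cons _)
  | cons a w₁ ih =>
    obtain ⟨t, y⟩ := a
    simp only [List.cons_append, insertCore_cons]
    split_ifs
    · exact .single (.swap w₁ w₂ _ _ _ _ hpq)
    · exact .single ((SwapStep.swap w₁ w₂ _ _ _ _ hpq).cons _)
    · exact ih.cons _
    · exact .single (((SwapStep.swap w₁ w₂ _ _ _ _ hpq).cons _).cons _)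

lemma isNormal_insertCore {s : V} {x : G} (hx : x ≠ 1) {w : List (V × G)}
    (hw : IsNormal Γ w) : IsNormal Γ (insertCore Γ s x w) := by
  induction w with
  | nil => exact ⟨hx, id, trivial⟩
  | cons a w ih =>
    obtain ⟨t, y⟩ := a
    obtain ⟨hy, ht, hw'⟩ := hw
    rw [insertCore_cons]
    split_ifs with hst hxy hadj
    · exact hw'
    · exact hst ▸ ⟨hxy, ht, hw'⟩
    · exact ⟨hy, fun h => ht (startsWith_of_startsWith_insertCore hadj.symm h), ih hw'⟩
    · exact ⟨hx, by simp [hst, hadj], hy, ht, hw'⟩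

lemma isNormal_insert (s : V) (x : G) {w : List (V × G)} (hw : IsNormal Γ w) :
    IsNormal Γ (insert Γ s x w) := by
  unfold insert
  split_ifs with hx
  exacts [hw, isNormal_insertCore hx hw]

lemma insert_swapEquiv (s : V) (x : G) {w w' : List (V × G)} (h : SwapEquiv Γ w w') :
    SwapEquiv Γ (insert Γ s x w) (insert Γ s x w') := by
  unfold insert
  split_ifs
  · exact h
  · exact Relation.ReflTransGen.lift' _ (fun _ _ => insertCore_swapStep s x) _ _ h

lemma insert_cons_self (s : V) (x : G) {z : G} (hz : z ≠ 1) (w : List (V × G)) :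
    insert Γ s x ((s, z) :: w) = if x * z = 1 then w else (s, x * z) :: w := by
  unfold insert
  split_ifs <;> simp_all [insertCore_cons]

lemma insert_cons_of_adj {s t : V} (hst : Γ.Adj s t) (x z : G) (w : List (V × G)) :
    insert Γ s x ((t, z) :: w) = (t, z) :: insert Γ s x w := by
  unfold insert
  split_ifs
  exacts [rfl, insertCore_cons_of_adj hst x z w]

lemma insert_swapEquiv_of_not_startsWith {s : V} {w : List (V × G)}
    (hw : ¬ StartsWith Γ s w) {x : G} (hx : x ≠ 1) :
    SwapEquiv Γ (insert Γ s x w) ((s, x) :: w) := by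
  rw [insert_of_ne_one s hx]
  induction w with
  | nil => exact .refl
  | cons a w ih =>
    obtain ⟨t, y⟩ := a
    simp only [startsWith_cons, not_or, not_and] at hw
    by_cases hst : Γ.Adj s t
    · rw [insertCore_cons_of_adj hst]
      exact ((ih (hw.2 hst)).cons _).tail (.head hst.symm w)
    · rw [insertCore_cons, if_neg hw.1, if_neg hst]

lemma insert_insert (s : V) (x y : G) {w : List (V × G)} (hw : IsNormal Γ w) :
    SwapEquiv Γ (insert Γ s x (insert Γ s y w)) (insert Γ s (x * y) w) := by
  induction w with
  | nil =>
    simp only [insert]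
    split_ifs <;> simp_all [insertCore_cons, Relation.ReflTransGen.refl]
  | cons a w ih =>
    obtain ⟨t, z⟩ := a
    obtain ⟨hz, ht, hw⟩ := hw
    by_cases hst : s = t
    · subst hst
      rw [insert_cons_self s y hz]
      split_ifs with hyz
      · rw [insert_cons_self s _ hz, mul_assoc, hyz, mul_one]
        split_ifs with hx
        · rw [hx, insert_of_eq_one]
        · exact insert_swapEquiv_of_not_startsWith ht hx
      · rw [insert_cons_self s x hyz, insert_cons_self s _ hz, mul_assoc]
    by_cases hadj : Γ.Adj s t
    · simp only [insert_cons_of_adj hadj]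
      exact (ih hw).cons _
    · simp only [insert]
      split_ifs <;> simp_all [insertCore_cons, Relation.ReflTransGen.refl]

lemma insert_comm {s t : V} (hst : Γ.Adj s t) (x y : G) (w : List (V × G)) :
    SwapEquiv Γ (insert Γ s x (insert Γ t y w)) (insert Γ t y (insert Γ s x w)) := by
  by_cases hx : x = 1
  · rw [hx, insert_of_eq_one, insert_of_eq_one]
  by_cases hy : y = 1
  · rw [hy, insert_of_eq_one, insert_of_eq_one]
  simp only [insert_of_ne_one _ hx, insert_of_ne_one _ hy]
  induction w with
  | nil =>
    simp only [insertCore_nil, insertCore_cons, hst.ne, hst.ne', hst, hst.symm, if_true, if_false]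
    exact .single (.head hst.symm _)
  | cons a w ih =>
    obtain ⟨u, z⟩ := a
    by_cases hsu : s = u
    · subst hsu
      simp only [insertCore_cons, hst.ne', hst.symm, if_true, if_false]
      split_ifs
      exacts [.refl, by rw [insertCore_cons_of_adj hst.symm]]
    by_cases htu : t = u
    · subst htu
      simp only [insertCore_cons, hst.ne, hst, if_true, if_false]
      split_ifs
      exacts [.refl, by rw [insertCore_cons_of_adj hst]]
    by_cases hsu' : Γ.Adj s u <;> by_cases htu' : Γ.Adj t u <;>
      simp only [insertCore_cons, hsu, htu, hsu', htu', hst.ne, hst.ne', hst, hst.symm,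
        if_true, if_false]
    exacts [ih.cons _, .refl, .refl, .single (.head hst.symm _)]

end Insertion

section NormalForm

variable {V : Type*} (Γ : SimpleGraph V) (G : Type*) [Group G]

instance normalWordSetoid : Setoid {w : List (V × G) // IsNormal Γ w} where
  r w w' := SwapEquiv Γ w.1 w'.1
  iseqv := ⟨fun _ => .refl, SwapEquiv.symm, .trans⟩

abbrev NormalForm : Type _ := Quotient (normalWordSetoid Γ G)

variable {G} [DecidableEq V] [DecidableRel Γ.Adj] [DecidableEq G]

def NormalForm.insert (s : V) (x : G) : NormalForm Γ G → NormalForm Γ G :=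
  Quotient.map (fun w => ⟨GraphProduct.insert Γ s x w.1, isNormal_insert s x w.2⟩)
    fun _ _ => insert_swapEquiv s x

variable {Γ}

lemma NormalForm.insert_one (s : V) (q : NormalForm Γ G) : NormalForm.insert Γ s 1 q = q := by
  induction q using Quotient.inductionOn with
  | h w => exact congrArg (⟦·⟧) (Subtype.ext (insert_of_eq_one s w.1))

lemma NormalForm.insert_insert (s : V) (x y : G) (q : NormalForm Γ G) :
    NormalForm.insert Γ s x (NormalForm.insert Γ s y q) = NormalForm.insert Γ s (x * y) q := by
  induction q using Quotient.inductionOn with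
  | h w => exact Quotient.sound (GraphProduct.insert_insert s x y w.2)

variable (Γ) in
def vertexAction (s : V) : G →* Equiv.Perm (NormalForm Γ G) where
  toFun x :=
    { toFun := NormalForm.insert Γ s x
      invFun := NormalForm.insert Γ s x⁻¹
      left_inv q := by rw [NormalForm.insert_insert, inv_mul_cancel, NormalForm.insert_one]
      right_inv q := by rw [NormalForm.insert_insert, mul_inv_cancel, NormalForm.insert_one] }
  map_one' := Equiv.ext (NormalForm.insert_one s)
  map_mul' x y := Equiv.ext fun q => (NormalForm.insert_insert s x y q).symm

lemma vertexAction_commute {s t : V} (hst : Γ.Adj s t) (x y : G) :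
    Commute (vertexAction Γ s x) (vertexAction Γ t y) := by
  refine Equiv.ext fun q => ?_
  induction q using Quotient.inductionOn with
  | h w => exact Quotient.sound (insert_comm hst x y w.1)

end NormalForm

section Relators

variable {V : Type*} {Γ : SimpleGraph V} {c : V → ℕ∞}

lemma mk_eq_one_of_mem_rels {r : FreeGroup V} (hr : r ∈ graphProductRels Γ c) :
    PresentedGroup.mk (graphProductRels Γ c) r = 1 :=
  (QuotientGroup.eq_one_iff r).mpr (Subgroup.subset_normalClosure hr)

lemma gpGen_pow_eq_one {s : V} {n : ℕ} (h : c s = n) : gpGen Γ c s ^ n = 1 := by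
  have := mk_eq_one_of_mem_rels (Γ := Γ) (Or.inl ⟨s, n, h, rfl⟩)
  rwa [map_pow] at this

lemma gpGen_commute {s t : V} (hst : Γ.Adj s t) : Commute (gpGen Γ c s) (gpGen Γ c t) := by
  have := mk_eq_one_of_mem_rels (c := c) (Or.inr ⟨s, t, hst, rfl⟩)
  simp only [map_mul, map_inv] at this
  exact commutatorElement_eq_one_iff_commute.mp this

end Relators

section Action

variable {V : Type*} (Γ : SimpleGraph V) (c : V → ℕ∞)
  [DecidableEq V] [DecidableRel Γ.Adj] [DecidableEq (GraphProduct Γ c)]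

def normalFormAction : GraphProduct Γ c →* Equiv.Perm (NormalForm Γ (GraphProduct Γ c)) :=
  PresentedGroup.toGroup (f := fun s => vertexAction Γ s (gpGen Γ c s)) <| by
    rintro r (⟨s, n, hs, rfl⟩ | ⟨s, t, hst, rfl⟩)
    · rw [map_pow, FreeGroup.lift_apply_of, ← map_pow, gpGen_pow_eq_one hs, map_one]
    · simp only [map_mul, map_inv, FreeGroup.lift_apply_of]
      rw [(vertexAction_commute hst _ _).eq, mul_inv_cancel_right, mul_inv_cancel]

lemma normalFormAction_gpGen (s : V) :
    normalFormAction Γ c (gpGen Γ c s) = vertexAction Γ s (gpGen Γ c s) :=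
  PresentedGroup.toGroup.of _

end Action

end GraphProduct

section ReducedWords

open GraphProduct

variable {V : Type*} {Γ : SimpleGraph V} {c : V → ℕ∞}

lemma GPMove.cons (a : V × ℤ) {w w' : List (V × ℤ)} (h : GPMove Γ c w w') :
    GPMove Γ c (a :: w) (a :: w') := by
  cases h with
  | del w₁ w₂ s e h => exact .del (a :: w₁) w₂ s e h
  | merge w₁ w₂ s x y => exact .merge (a :: w₁) w₂ s x y
  | swap w₁ w₂ s t x y h => exact .swap (a :: w₁) w₂ s t x y h

lemma GPMove.reflTransGen_cons (a : V × ℤ) {w w' : List (V × ℤ)}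
    (h : Relation.ReflTransGen (GPMove Γ c) w w') :
    Relation.ReflTransGen (GPMove Γ c) (a :: w) (a :: w') :=
  Relation.ReflTransGen.lift (a :: ·) (fun _ _ => GPMove.cons a) _ _ h

lemma GPReduced.of_cons {a : V × ℤ} {w : List (V × ℤ)} (h : GPReduced Γ c (a :: w)) :
    GPReduced Γ c w := fun w' hw' => by
  simpa using h (a :: w') (GPMove.reflTransGen_cons a hw')

lemma GPReduced.gpGen_zpow_ne_one {s : V} {e : ℤ} {w : List (V × ℤ)}
    (h : GPReduced Γ c ((s, e) :: w)) : gpGen Γ c s ^ e ≠ 1 := fun he => by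
  simpa using h w (.single (by simpa using GPMove.del [] w s e he))

lemma GPMove.exists_shorter_of_startsWith {s : V} {w : List (V × ℤ)} (hs : StartsWith Γ s w)
    (e : ℤ) :
    ∃ w', Relation.ReflTransGen (GPMove Γ c) ((s, e) :: w) w' ∧ w'.length ≤ w.length := by
  induction w generalizing e with
  | nil => exact hs.elim
  | cons a w ih =>
    obtain ⟨t, f⟩ := a
    rcases hs with rfl | ⟨hst, hs⟩
    · exact ⟨(s, e + f) :: w, .single (by simpa using GPMove.merge [] w s e f), by simp⟩
    · obtain ⟨w', hw', hlen⟩ := ih hs e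
      exact ⟨(t, f) :: w', .head (by simpa using GPMove.swap [] w s t e f hst)
        (GPMove.reflTransGen_cons (t, f) hw'), by simpa⟩

lemma GPReduced.not_startsWith {s : V} {e : ℤ} {w : List (V × ℤ)}
    (h : GPReduced Γ c ((s, e) :: w)) : ¬ StartsWith Γ s w := fun hs => by
  obtain ⟨w', hw', hlen⟩ := GPMove.exists_shorter_of_startsWith hs e
  have := h w' hw'
  simp only [List.length_cons] at this
  omega

end ReducedWords

namespace GraphProduct

section NormalFormTheorem

variable {V : Type*} (Γ : SimpleGraph V) (c : V → ℕ∞)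

def toLetters (w : List (V × ℤ)) : List (V × GraphProduct Γ c) :=
  w.map fun p => (p.1, gpGen Γ c p.1 ^ p.2)

variable {Γ c} [DecidableEq V] [DecidableRel Γ.Adj] [DecidableEq (GraphProduct Γ c)]

lemma exists_normalFormAction_wordProd {w : List (V × ℤ)} (hw : GPReduced Γ c w) :
    ∃ m : {m // IsNormal Γ m},
      normalFormAction Γ c (wordProd Γ c w) ⟦⟨[], isNormal_nil Γ⟩⟧ = ⟦m⟧ ∧
        SwapEquiv Γ m.1 (toLetters Γ c w) := by
  induction w with
  | nil => exact ⟨⟨[], isNormal_nil Γ⟩, by simp [wordProd], .refl⟩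
  | cons a w ih =>
    obtain ⟨s, e⟩ := a
    obtain ⟨m, hm, hmw⟩ := ih hw.of_cons
    have hx := hw.gpGen_zpow_ne_one
    have hs : ¬ StartsWith Γ s m.1 := fun hs =>
      hw.not_startsWith ((startsWith_map _ s w).mp (hmw.startsWith hs))
    refine ⟨⟨insert Γ s _ m.1, isNormal_insert s (gpGen Γ c s ^ e) m.2⟩, ?_, ?_⟩
    · have hprod : wordProd Γ c ((s, e) :: w) = gpGen Γ c s ^ e * wordProd Γ c w :=
        List.prod_cons
      rw [hprod, map_mul, Equiv.Perm.mul_apply, hm, map_zpow, normalFormAction_gpGen,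
        ← map_zpow]
      rfl
    · exact (insert_swapEquiv_of_not_startsWith hs hx).trans (hmw.cons _)

lemma swapEquiv_toLetters_of_wordProd_eq {w w' : List (V × ℤ)} (hw : GPReduced Γ c w)
    (hw' : GPReduced Γ c w') (h : wordProd Γ c w = wordProd Γ c w') :
    SwapEquiv Γ (toLetters Γ c w) (toLetters Γ c w') := by
  obtain ⟨m, hm, hmw⟩ := exists_normalFormAction_wordProd hw
  obtain ⟨m', hm', hmw'⟩ := exists_normalFormAction_wordProd hw'
  have hmm' : SwapEquiv Γ m.1 m'.1 := Quotient.exact (hm.symm.trans (h ▸ hm'))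
  exact hmw.symm.trans (hmm'.trans hmw')

end NormalFormTheorem

end GraphProduct

open GraphProduct

theorem endsWith_two_letters_adj_general {V : Type*}
    (Γ : SimpleGraph V) (c : V → ℕ∞) (g : GraphProduct Γ c) (s t : V)
    (hs : EndsWith Γ c g s) (ht : EndsWith Γ c g t) (hst : s ≠ t) :
    Γ.Adj s t ∧ Commute (gpGen Γ c s) (gpGen Γ c t) := by
  classical
  obtain ⟨A, e, hA, rfl⟩ := hs
  obtain ⟨B, f, hB, hAB⟩ := ht
  have hswap := (swapEquiv_toLetters_of_wordProd_eq hA hB hAB.symm).reverse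
  have hs' : StartsWith Γ s (toLetters Γ c (B ++ [(t, f)])).reverse :=
    hswap.startsWith (by simp [toLetters])
  have hadj := adj_of_startsWith hst hs' (by simp [toLetters])
  exact ⟨hadj, gpGen_commute hadj⟩

/-- if `g` ends with `s` and also ends with `t` with `s ≠ t`, then
`s` and `t` are joined by an edge of `Γ` (hence commute). -/
theorem endsWith_two_letters_adj {V : Type*} [Fintype V] [DecidableEq V]
    (Γ : SimpleGraph V) (c : V → ℕ∞) (g : GraphProduct Γ c) (s t : V)
    (hs : EndsWith Γ c g s) (ht : EndsWith Γ c g t) (hst : s ≠ t) :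
    Γ.Adj s t ∧ Commute (gpGen Γ c s) (gpGen Γ c t) :=
  endsWith_two_letters_adj_general Γ c g s t hs ht hst
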